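/- arXiv:2007.13315 — 5 statements merged into one kernel-verified Lean document; each statement's English description precedes it below -/
import Mathlib

section
/- Let n ≥ 2 and m ≥ 1 be integers and let k be an integer with 0 ≤ k < n. There exists a constant C > 0, depending only on k, n and m, such that for every ℓ > 0, every real a with 0 < a ≤ ℓ, and every n-times continuously differentiable function H : [0, ℓ] → ℝ^m, one has a^{2k} ∫₀^ℓ ‖H^{(k)}(θ)‖² dθ ≤ C ( ∫₀^ℓ ‖H(θ)‖² dθ + a^{2n} ∫₀^ℓ ‖H^{(n)}(θ)‖² dθ ). -/
/-!
Set `A j = ∫₀^ℓ ‖H⁽ʲ⁾‖²`. The analytic input is the second-order estimate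
`b² ∫ ‖g'‖² ≤ 648 (∫ ‖g‖² + b⁴ ∫ ‖g''‖²)` for every scale `0 < b ≤ ℓ`. On a single interval of
length `L` it comes from comparing `g'(s)` with the difference quotient of `g` between two points
of the outer thirds where `‖g‖` is at most its quadratic mean, the error being controlled by
`∫ ‖g''‖`; cutting `[0, ℓ]` into pieces of length between `b / 2` and `b` globalises it.
Applied to `H⁽ⁱ⁾` at scale `b = ε a`, it says that `B j = a^(2j) A j` satisfies
`ε² B (i+1) ≤ 648 (B i + ε⁴ B (i+2))` for all `0 < ε ≤ 1`. A discrete maximum principle for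
`B j / w j` with log-concave weights `w j = ρ^((n-j)²)` then bounds every `B k` by the endpoint
values `B 0` and `B n`.
-/

open MeasureTheory Set intervalIntegral

theorem sq_intervalIntegral_le {f : ℝ → ℝ} {c d : ℝ} (hcd : c ≤ d)
    (hf : ContinuousOn f (Icc c d)) :
    (∫ t in c..d, f t) ^ 2 ≤ (d - c) * ∫ t in c..d, f t ^ 2 := by
  have hfi : IntervalIntegrable f volume c d := hf.intervalIntegrable_of_Icc hcd
  have hfi2 : IntervalIntegrable (fun t ↦ f t ^ 2) volume c d :=
    (hf.pow 2).intervalIntegrable_of_Icc hcd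
  have hquad : ∀ x : ℝ, 0 ≤ (d - c) * (x * x) + (-2 * ∫ t in c..d, f t) * x +
      ∫ t in c..d, f t ^ 2 := fun x ↦ by
    have h : ∫ t in c..d, (x - f t) ^ 2 =
        (d - c) * (x * x) + (-2 * ∫ t in c..d, f t) * x + ∫ t in c..d, f t ^ 2 := by
      simp only [sub_sq]
      rw [integral_add (intervalIntegrable_const.sub (hfi.const_mul _)) hfi2,
        integral_sub intervalIntegrable_const (hfi.const_mul _),
        intervalIntegral.integral_const_mul, intervalIntegral.integral_const, smul_eq_mul]
      ring
    exact h ▸ integral_nonneg hcd fun t _ ↦ sq_nonneg _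
  have := discrim_le_zero hquad
  unfold discrim at this
  linarith

theorem exists_mem_Icc_mul_le_intervalIntegral {f : ℝ → ℝ} {c d p q : ℝ}
    (hf : ContinuousOn f (Icc c d)) (hf0 : ∀ t ∈ Icc c d, 0 ≤ f t) (hpq : p < q)
    (hsub : Icc p q ⊆ Icc c d) :
    ∃ x ∈ Icc p q, (q - p) * f x ≤ ∫ t in c..d, f t := by
  obtain ⟨x, hx, hmin⟩ :=
    isCompact_Icc.exists_isMinOn (nonempty_Icc.2 hpq.le) (hf.mono hsub)
  refine ⟨x, hx, ?_⟩
  have hp := hsub (left_mem_Icc.2 hpq.le)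
  have hq := hsub (right_mem_Icc.2 hpq.le)
  calc (q - p) * f x = ∫ _ in p..q, f x := by simp
    _ ≤ ∫ t in p..q, f t := integral_mono_on hpq.le intervalIntegrable_const
        ((hf.mono hsub).intervalIntegrable_of_Icc hpq.le) fun t ht ↦ hmin ht
    _ ≤ ∫ t in c..d, f t := integral_mono_interval hp.1 hpq.le hq.2
        ((ae_restrict_mem measurableSet_Ioc).mono fun t ht ↦ hf0 t (Ioc_subset_Icc_self ht))
        (hf.intervalIntegrable_of_Icc (hp.1.trans hp.2))

theorem exists_nat_div_le_and_le_two_mul {x b : ℝ} (hb : 0 < b) (hbx : b ≤ x) :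
    ∃ N : ℕ, 0 < N ∧ x / N ≤ b ∧ b ≤ 2 * (x / N) := by
  have hxb : 1 ≤ x / b := (one_le_div hb).2 hbx
  refine ⟨⌈x / b⌉₊, Nat.ceil_pos.2 (by linarith), ?_, ?_⟩
  · have hN : 0 < (⌈x / b⌉₊ : ℝ) := by positivity
    rw [div_le_iff₀ hN, ← div_le_iff₀' hb]
    exact Nat.le_ceil _
  · have hN : (⌈x / b⌉₊ : ℝ) < 2 * (x / b) := by
      linarith [Nat.ceil_lt_add_one (by linarith : 0 ≤ x / b)]
    have hN0 : 0 < (⌈x / b⌉₊ : ℝ) := by positivity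
    rw [mul_div_assoc', le_div_iff₀ hN0]
    rw [mul_div_assoc', lt_div_iff₀ hb] at hN
    linarith

open Finset in
theorem le_mul_div_add_div_of_interior_le_half {n : ℕ} {w B : ℕ → ℝ} (hw : ∀ j, 0 < w j)
    (hB : ∀ j, 0 ≤ B j)
    (hinterior : ∀ i, i + 2 ≤ n → ∀ M, B i ≤ w i * M → B (i + 2) ≤ w (i + 2) * M →
      B (i + 1) ≤ w (i + 1) * M / 2)
    {k : ℕ} (hk : k ≤ n) :
    B k ≤ w k * (B 0 / w 0 + B n / w n) := by
  obtain ⟨j, hj, hmax⟩ := (range (n + 1)).exists_max_image (fun j ↦ B j / w j) ⟨0, by simp⟩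
  set M := B j / w j
  have hle : ∀ i ≤ n, B i ≤ w i * M := fun i hi ↦ by
    rw [← div_le_iff₀' (hw i)]
    exact hmax i (mem_range.2 (Nat.lt_succ_of_le hi))
  have hendpoints : 0 ≤ B 0 / w 0 ∧ 0 ≤ B n / w n :=
    ⟨div_nonneg (hB 0) (hw 0).le, div_nonneg (hB n) (hw n).le⟩
  suffices hM : M ≤ B 0 / w 0 + B n / w n from
    (hle k hk).trans (mul_le_mul_of_nonneg_left hM (hw k).le)
  obtain rfl | rfl | ⟨i, rfl, hi⟩ : j = 0 ∨ j = n ∨ ∃ i, j = i + 1 ∧ i + 2 ≤ n := by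
    have := mem_range.1 hj
    rcases j with _ | i
    · exact .inl rfl
    · by_cases h : i + 1 = n
      · exact .inr (.inl h)
      · exact .inr (.inr ⟨i, rfl, by omega⟩)
  · linarith
  · linarith
  · have hhalf := hinterior i hi M (hle i (by omega)) (hle (i + 2) hi)
    have hBM : B (i + 1) = w (i + 1) * M := by
      simp only [M]; field_simp [(hw (i + 1)).ne']
    have : w (i + 1) * M ≤ 0 := by linarith
    have := nonpos_of_mul_nonpos_right this (hw (i + 1))
    linarith

theorem exists_le_mul_add_of_sq_mul_le {K : ℝ} (hK : 0 ≤ K) {n k : ℕ} (hk : k ≤ n) :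
    ∃ C > 0, ∀ B : ℕ → ℝ, (∀ j, 0 ≤ B j) →
      (∀ i, i + 2 ≤ n → ∀ ε : ℝ, 0 < ε → ε ≤ 1 →
        ε ^ 2 * B (i + 1) ≤ K * (B i + ε ^ 4 * B (i + 2))) →
      B k ≤ C * (B 0 + B n) := by
  -- at `j = i + 1` take `ε = ρ ^ (n - j)`:
  -- both `w i` and `ε ^ 4 * w (i + 2)` are then `ρ * ε ^ 2 * w j`
  set ρ : ℝ := (4 * K + 1)⁻¹
  have hρ : 0 < ρ := by positivity
  have hρ1 : ρ ≤ 1 := inv_le_one_of_one_le₀ (by linarith)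
  have hKρ : 2 * K * ρ ≤ 1 / 2 := by
    simp only [ρ]; rw [← div_eq_mul_inv, div_le_iff₀ (by positivity)]; linarith
  set w : ℕ → ℝ := fun j ↦ ρ ^ (n - j) ^ 2
  have hw : ∀ j, 0 < w j := fun j ↦ by positivity
  refine ⟨w k / w 0 + w k, by have := hw k; positivity, fun B hB hrec ↦ ?_⟩
  have key := le_mul_div_add_div_of_interior_le_half hw hB (fun i hi M hMi hMi2 ↦ ?_) hk
  · have hwn : w n = 1 := by simp [w]
    rw [hwn, div_one] at key
    have := mul_nonneg (div_nonneg (hw k).le (hw 0).le) (hB n)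
    have := mul_nonneg (hw k).le (hB 0)
    calc B k ≤ w k * (B 0 / w 0 + B n) := key
      _ = w k / w 0 * B 0 + w k * B n := by ring
      _ ≤ w k / w 0 * B 0 + w k * B n + (w k / w 0 * B n + w k * B 0) := by linarith
      _ = (w k / w 0 + w k) * (B 0 + B n) := by ring
  obtain ⟨p, rfl⟩ := Nat.exists_eq_add_of_le hi
  have hw_i : w i = ρ * (ρ ^ (p + 1)) ^ 2 * w (i + 1) := by
    simp only [w, show i + 2 + p - i = p + 2 by omega, show i + 2 + p - (i + 1) = p + 1 by omega,
      ← pow_mul, ← pow_succ', ← pow_add]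
    congr 1; ring
  have hw_i2 : (ρ ^ (p + 1)) ^ 4 * w (i + 2) = ρ * (ρ ^ (p + 1)) ^ 2 * w (i + 1) := by
    simp only [w, show i + 2 + p - (i + 2) = p by omega, show i + 2 + p - (i + 1) = p + 1 by omega,
      ← pow_mul, ← pow_succ', ← pow_add]
    congr 1; ring
  have hM : 0 ≤ M := nonneg_of_mul_nonneg_right ((hB i).trans hMi) (hw i)
  have hε : 0 < ρ ^ (p + 1) := by positivity
  have h := hrec i hi _ hε (pow_le_one₀ hρ.le hρ1)
  have : (ρ ^ (p + 1)) ^ 2 * B (i + 1) ≤ (ρ ^ (p + 1)) ^ 2 * (w (i + 1) * M / 2) := by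
    calc _ ≤ K * (B i + (ρ ^ (p + 1)) ^ 4 * B (i + 2)) := h
      _ ≤ K * (w i * M + (ρ ^ (p + 1)) ^ 4 * (w (i + 2) * M)) := by gcongr
      _ = (ρ ^ (p + 1)) ^ 2 * (2 * K * ρ * (w (i + 1) * M)) := by
        rw [hw_i, ← mul_assoc _ (w _), hw_i2]; ring
      _ ≤ (ρ ^ (p + 1)) ^ 2 * (w (i + 1) * M / 2) := by
        have := mul_nonneg (hw (i + 1)).le hM
        gcongr; nlinarith
  exact le_of_mul_le_mul_left this (by positivity)

section

variable {E : Type*} [NormedAddCommGroup E] [NormedSpace ℝ E]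

theorem integral_eq_sub_of_hasDerivWithinAt_Icc [CompleteSpace E] {f f' : ℝ → E} {a b : ℝ}
    (hab : a ≤ b) (hf : ∀ t ∈ Icc a b, HasDerivWithinAt f (f' t) (Icc a b) t)
    (hf' : ContinuousOn f' (Icc a b)) :
    ∫ t in a..b, f' t = f b - f a :=
  integral_eq_sub_of_hasDerivAt_of_le hab (fun t ht ↦ (hf t ht).continuousWithinAt)
    (fun t ht ↦ (hf t (Ioo_subset_Icc_self ht)).hasDerivAt (Icc_mem_nhds ht.1 ht.2))
    (hf'.intervalIntegrable_of_Icc hab)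

theorem norm_sub_le_integral_norm_deriv [CompleteSpace E] {f f' : ℝ → E} {c d s t : ℝ}
    (hf : ∀ u ∈ Icc c d, HasDerivWithinAt f (f' u) (Icc c d) u)
    (hf' : ContinuousOn f' (Icc c d)) (hs : s ∈ Icc c d) (ht : t ∈ Icc c d) :
    ‖f t - f s‖ ≤ ∫ u in c..d, ‖f' u‖ := by
  wlog hst : s ≤ t generalizing s t
  · rw [norm_sub_rev]; exact this ht hs (le_of_not_ge hst)
  have hsub : Icc s t ⊆ Icc c d := Icc_subset_Icc hs.1 ht.2
  rw [← integral_eq_sub_of_hasDerivWithinAt_Icc hst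
    (fun u hu ↦ (hf u (hsub hu)).mono hsub) (hf'.mono hsub)]
  refine (intervalIntegral.norm_integral_le_integral_norm hst).trans
    (integral_mono_interval hs.1 hst ht.2 (Filter.Eventually.of_forall fun _ ↦ norm_nonneg _) ?_)
  exact hf'.norm.intervalIntegrable_of_Icc (hs.1.trans (hst.trans ht.2))

theorem sub_mul_norm_le_of_norm_deriv_sub_le {g g' : ℝ → E} {v : E} {x y D : ℝ} (hxy : x ≤ y)
    (hg : ∀ t ∈ Icc x y, HasDerivWithinAt g (g' t) (Icc x y) t)
    (hD : ∀ t ∈ Icc x y, ‖g' t - v‖ ≤ D) :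
    (y - x) * ‖v‖ ≤ ‖g x‖ + ‖g y‖ + D * (y - x) := by
  have hmv := norm_image_sub_le_of_norm_deriv_le_segment' (f := fun t ↦ g t - t • v)
    (fun t ht ↦ by
      have h := (hg t ht).sub ((hasDerivWithinAt_id t _).smul_const v)
      rwa [one_smul] at h)
    (fun t ht ↦ hD t (Ico_subset_Icc_self ht)) y ⟨hxy, le_rfl⟩
  have hv : (y - x) • v = (g y - g x) - ((g y - y • v) - (g x - x • v)) := by
    rw [sub_smul]; abel
  calc (y - x) * ‖v‖ = ‖(y - x) • v‖ := by rw [norm_smul, Real.norm_of_nonneg (sub_nonneg.2 hxy)]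
    _ ≤ ‖g y - g x‖ + D * (y - x) := hv ▸ (norm_sub_le _ _).trans (by gcongr)
    _ ≤ ‖g x‖ + ‖g y‖ + D * (y - x) := by linarith [norm_sub_le (g y) (g x)]

theorem sub_pow_three_mul_norm_deriv_sq_le [CompleteSpace E] {g g' g'' : ℝ → E} {c d s : ℝ}
    (hcd : c < d) (hg : ∀ t ∈ Icc c d, HasDerivWithinAt g (g' t) (Icc c d) t)
    (hg' : ∀ t ∈ Icc c d, HasDerivWithinAt g' (g'' t) (Icc c d) t)
    (hg'' : ContinuousOn g'' (Icc c d)) (hs : s ∈ Icc c d) :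
    (d - c) ^ 3 * ‖g' s‖ ^ 2 ≤
      162 * (∫ t in c..d, ‖g t‖ ^ 2) + 3 * (d - c) ^ 4 * ∫ t in c..d, ‖g'' t‖ ^ 2 := by
  set L := d - c
  have hL : 0 < L := sub_pos.2 hcd
  have hgc : ContinuousOn g (Icc c d) := fun t ht ↦ (hg t ht).continuousWithinAt
  have hg2 : ContinuousOn (fun t ↦ ‖g t‖ ^ 2) (Icc c d) := hgc.norm.pow 2
  obtain ⟨x, hx, hgx⟩ := exists_mem_Icc_mul_le_intervalIntegral hg2 (fun _ _ ↦ by positivity)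
    (show c < c + L / 3 by linarith) (Icc_subset_Icc le_rfl (by linarith))
  obtain ⟨y, hy, hgy⟩ := exists_mem_Icc_mul_le_intervalIntegral hg2 (fun _ _ ↦ by positivity)
    (show d - L / 3 < d by linarith) (Icc_subset_Icc (by linarith) le_rfl)
  set I₂ := ∫ t in c..d, ‖g'' t‖
  have hxy : Icc x y ⊆ Icc c d := Icc_subset_Icc hx.1 hy.2
  have hmv := sub_mul_norm_le_of_norm_deriv_sub_le (v := g' s) (show x ≤ y by linarith [hx.2, hy.1])
    (fun t ht ↦ (hg t (hxy ht)).mono hxy)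
    (fun t ht ↦ norm_sub_le_integral_norm_deriv hg' hg'' hs (hxy ht))
  have hthirds : L * ‖g' s‖ ≤ 3 * (‖g x‖ + ‖g y‖) + L * I₂ := by
    rcases le_total ‖g' s‖ I₂ with h | h
    · nlinarith [norm_nonneg (g x), norm_nonneg (g y)]
    · nlinarith [hx.2, hy.1]
  have hCS : I₂ ^ 2 ≤ L * ∫ t in c..d, ‖g'' t‖ ^ 2 := sq_intervalIntegral_le hcd.le hg''.norm
  calc L ^ 3 * ‖g' s‖ ^ 2 = L * (L * ‖g' s‖) ^ 2 := by ring
    _ ≤ L * (3 * (‖g x‖ + ‖g y‖) + L * I₂) ^ 2 := by gcongr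
    _ ≤ L * (27 * ‖g x‖ ^ 2 + 27 * ‖g y‖ ^ 2 + 3 * L ^ 2 * I₂ ^ 2) := by
      gcongr; nlinarith [sq_nonneg (‖g x‖ - ‖g y‖), sq_nonneg (3 * ‖g x‖ - L * I₂),
        sq_nonneg (3 * ‖g y‖ - L * I₂)]
    _ = 81 * ((L / 3) * ‖g x‖ ^ 2) + 81 * ((L / 3) * ‖g y‖ ^ 2) + 3 * L ^ 3 * I₂ ^ 2 := by ring
    _ ≤ 81 * (∫ t in c..d, ‖g t‖ ^ 2) + 81 * (∫ t in c..d, ‖g t‖ ^ 2) +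
        3 * L ^ 3 * (L * ∫ t in c..d, ‖g'' t‖ ^ 2) := by
      rw [show c + L / 3 - c = L / 3 by ring] at hgx
      rw [show d - (d - L / 3) = L / 3 by ring] at hgy
      gcongr
    _ = 162 * (∫ t in c..d, ‖g t‖ ^ 2) + 3 * L ^ 4 * ∫ t in c..d, ‖g'' t‖ ^ 2 := by ring

theorem sub_sq_mul_integral_norm_deriv_sq_le [CompleteSpace E] {g g' g'' : ℝ → E} {c d : ℝ}
    (hcd : c < d) (hg : ∀ t ∈ Icc c d, HasDerivWithinAt g (g' t) (Icc c d) t)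
    (hg' : ∀ t ∈ Icc c d, HasDerivWithinAt g' (g'' t) (Icc c d) t)
    (hg'' : ContinuousOn g'' (Icc c d)) :
    (d - c) ^ 2 * ∫ t in c..d, ‖g' t‖ ^ 2 ≤
      162 * ((∫ t in c..d, ‖g t‖ ^ 2) + (d - c) ^ 4 * ∫ t in c..d, ‖g'' t‖ ^ 2) := by
  set L := d - c
  have hL : 0 < L := sub_pos.2 hcd
  have hg'c : ContinuousOn g' (Icc c d) := fun t ht ↦ (hg' t ht).continuousWithinAt
  have hQ₂ : 0 ≤ ∫ t in c..d, ‖g'' t‖ ^ 2 := integral_nonneg hcd.le fun _ _ ↦ by positivity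
  have hintegrated : L * (L ^ 2 * ∫ t in c..d, ‖g' t‖ ^ 2) ≤
      L * (162 * (∫ t in c..d, ‖g t‖ ^ 2) + 3 * L ^ 4 * ∫ t in c..d, ‖g'' t‖ ^ 2) := by
    calc L * (L ^ 2 * ∫ t in c..d, ‖g' t‖ ^ 2) = ∫ t in c..d, L ^ 3 * ‖g' t‖ ^ 2 := by
          rw [intervalIntegral.integral_const_mul]; ring
      _ ≤ ∫ _ in c..d, 162 * (∫ t in c..d, ‖g t‖ ^ 2) + 3 * L ^ 4 * ∫ t in c..d, ‖g'' t‖ ^ 2 :=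
          integral_mono_on hcd.le
            (((hg'c.norm.pow 2).const_mul _).intervalIntegrable_of_Icc hcd.le)
            intervalIntegrable_const
            fun s hs ↦ sub_pow_three_mul_norm_deriv_sq_le hcd hg hg' hg'' hs
      _ = _ := by rw [intervalIntegral.integral_const, smul_eq_mul]
  nlinarith [le_of_mul_le_mul_left hintegrated hL, mul_nonneg (pow_nonneg hL.le 4) hQ₂]

theorem div_natCast_sq_mul_integral_norm_deriv_sq_le [CompleteSpace E] {g g' g'' : ℝ → E} {c d : ℝ}
    (hcd : c < d) (hg : ∀ t ∈ Icc c d, HasDerivWithinAt g (g' t) (Icc c d) t)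
    (hg' : ∀ t ∈ Icc c d, HasDerivWithinAt g' (g'' t) (Icc c d) t)
    (hg'' : ContinuousOn g'' (Icc c d)) {N : ℕ} (hN : 0 < N) :
    ((d - c) / N) ^ 2 * ∫ t in c..d, ‖g' t‖ ^ 2 ≤
      162 * ((∫ t in c..d, ‖g t‖ ^ 2) + ((d - c) / N) ^ 4 * ∫ t in c..d, ‖g'' t‖ ^ 2) := by
  set L := (d - c) / N
  have hL : 0 < L := div_pos (sub_pos.2 hcd) (Nat.cast_pos.2 hN)
  set p : ℕ → ℝ := fun i ↦ c + i * L
  have hp0 : p 0 = c := by simp [p]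
  have hpN : p N = d := by simp only [p, L]; field_simp; ring
  have hstep : ∀ i, p i < p (i + 1) := fun i ↦ by simp only [p]; push_cast; linarith
  have hsub : ∀ i < N, Icc (p i) (p (i + 1)) ⊆ Icc c d := fun i hi ↦ by
    rw [← hp0, ← hpN]
    refine Icc_subset_Icc ?_ ?_ <;> simp only [p] <;> gcongr
    · simp
    · exact_mod_cast hi
  have hsum : ∀ F : ℝ → ℝ, ContinuousOn F (Icc c d) →
      ∑ i ∈ Finset.range N, ∫ t in p i..p (i + 1), F t = ∫ t in c..d, F t := fun F hF ↦ by
    rw [sum_integral_adjacent_intervals fun i hi ↦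
      (hF.mono (hsub i hi)).intervalIntegrable_of_Icc (hstep i).le, hp0, hpN]
  have hgc : ContinuousOn g (Icc c d) := fun t ht ↦ (hg t ht).continuousWithinAt
  have hg'c : ContinuousOn g' (Icc c d) := fun t ht ↦ (hg' t ht).continuousWithinAt
  have hpiece := Finset.sum_le_sum fun i (hi : i ∈ Finset.range N) ↦
    have hi := hsub i (Finset.mem_range.1 hi)
    sub_sq_mul_integral_norm_deriv_sq_le (hstep i) (fun t ht ↦ (hg t (hi ht)).mono hi)
      (fun t ht ↦ (hg' t (hi ht)).mono hi) (hg''.mono hi)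
  have hlen : ∀ i, p (i + 1) - p i = L := fun i ↦ by simp only [p]; push_cast; ring
  simp only [hlen, ← Finset.mul_sum, Finset.sum_add_distrib] at hpiece
  rwa [hsum (fun t ↦ ‖g' t‖ ^ 2) (hg'c.norm.pow 2), hsum (fun t ↦ ‖g t‖ ^ 2) (hgc.norm.pow 2),
    hsum (fun t ↦ ‖g'' t‖ ^ 2) (hg''.norm.pow 2)] at hpiece

theorem sq_mul_integral_norm_deriv_sq_le [CompleteSpace E] {g g' g'' : ℝ → E} {c d b : ℝ}
    (hg : ∀ t ∈ Icc c d, HasDerivWithinAt g (g' t) (Icc c d) t)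
    (hg' : ∀ t ∈ Icc c d, HasDerivWithinAt g' (g'' t) (Icc c d) t)
    (hg'' : ContinuousOn g'' (Icc c d)) (hb : 0 < b) (hbcd : b ≤ d - c) :
    b ^ 2 * ∫ t in c..d, ‖g' t‖ ^ 2 ≤
      648 * ((∫ t in c..d, ‖g t‖ ^ 2) + b ^ 4 * ∫ t in c..d, ‖g'' t‖ ^ 2) := by
  obtain ⟨N, hN, hLb, hbL⟩ := exists_nat_div_le_and_le_two_mul hb hbcd
  have hcd : c < d := by linarith
  have h := div_natCast_sq_mul_integral_norm_deriv_sq_le hcd hg hg' hg'' hN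
  set L := (d - c) / N
  have hL : 0 ≤ L := by positivity
  have hQ₁ : 0 ≤ ∫ t in c..d, ‖g' t‖ ^ 2 := integral_nonneg hcd.le fun _ _ ↦ by positivity
  have hQ₂ : 0 ≤ ∫ t in c..d, ‖g'' t‖ ^ 2 := integral_nonneg hcd.le fun _ _ ↦ by positivity
  calc b ^ 2 * ∫ t in c..d, ‖g' t‖ ^ 2 ≤ 4 * (L ^ 2 * ∫ t in c..d, ‖g' t‖ ^ 2) := by
        rw [← mul_assoc]; gcongr; nlinarith
    _ ≤ 4 * (162 * ((∫ t in c..d, ‖g t‖ ^ 2) + L ^ 4 * ∫ t in c..d, ‖g'' t‖ ^ 2)) := by gcongr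
    _ = 648 * ((∫ t in c..d, ‖g t‖ ^ 2) + L ^ 4 * ∫ t in c..d, ‖g'' t‖ ^ 2) := by ring
    _ ≤ 648 * ((∫ t in c..d, ‖g t‖ ^ 2) + b ^ 4 * ∫ t in c..d, ‖g'' t‖ ^ 2) := by gcongr

theorem ContDiffOn.hasDerivWithinAt_iteratedDerivWithin {H : ℝ → E} {s : Set ℝ} {n i : ℕ}
    {t : ℝ} (hH : ContDiffOn ℝ n H s) (hs : UniqueDiffOn ℝ s) (hi : i < n) (ht : t ∈ s) :
    HasDerivWithinAt (iteratedDerivWithin i H s) (iteratedDerivWithin (i + 1) H s t) s t := by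
  rw [iteratedDerivWithin_succ]
  exact (hH.differentiableOn_iteratedDerivWithin (by exact_mod_cast hi) hs t ht).hasDerivWithinAt

theorem sq_mul_integral_norm_iteratedDerivWithin_sq_le [CompleteSpace E] {H : ℝ → E}
    {c d b : ℝ} {n i : ℕ} (hH : ContDiffOn ℝ n H (Icc c d)) (hi : i + 2 ≤ n) (hb : 0 < b)
    (hbcd : b ≤ d - c) :
    b ^ 2 * ∫ t in c..d, ‖iteratedDerivWithin (i + 1) H (Icc c d) t‖ ^ 2 ≤
      648 * ((∫ t in c..d, ‖iteratedDerivWithin i H (Icc c d) t‖ ^ 2) +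
        b ^ 4 * ∫ t in c..d, ‖iteratedDerivWithin (i + 2) H (Icc c d) t‖ ^ 2) := by
  have hs : UniqueDiffOn ℝ (Icc c d) := uniqueDiffOn_Icc (by linarith)
  exact sq_mul_integral_norm_deriv_sq_le
    (fun t ht ↦ hH.hasDerivWithinAt_iteratedDerivWithin hs (by omega) ht)
    (fun t ht ↦ hH.hasDerivWithinAt_iteratedDerivWithin hs (by omega) ht)
    (hH.continuousOn_iteratedDerivWithin (by exact_mod_cast hi) hs) hb hbcd

end

theorem interpolation_inequality_L2_general (n m k : ℕ) (hk : k < n) :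
    ∃ C : ℝ, 0 < C ∧
      ∀ ℓ : ℝ, 0 < ℓ → ∀ a : ℝ, 0 < a → a ≤ ℓ →
        ∀ H : ℝ → EuclideanSpace ℝ (Fin m), ContDiffOn ℝ n H (Icc 0 ℓ) →
          a ^ (2 * k) * ∫ θ in (0:ℝ)..ℓ, ‖iteratedDerivWithin k H (Icc 0 ℓ) θ‖ ^ 2 ≤
            C * ((∫ θ in (0:ℝ)..ℓ, ‖H θ‖ ^ 2) +
              a ^ (2 * n) * ∫ θ in (0:ℝ)..ℓ, ‖iteratedDerivWithin n H (Icc 0 ℓ) θ‖ ^ 2) := by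
  obtain ⟨C, hC, hCB⟩ := exists_le_mul_add_of_sq_mul_le (K := 648) (by norm_num) hk.le
  refine ⟨C, hC, fun ℓ hℓ a ha haℓ H hH ↦ ?_⟩
  set A : ℕ → ℝ := fun j ↦ ∫ θ in (0:ℝ)..ℓ, ‖iteratedDerivWithin j H (Icc 0 ℓ) θ‖ ^ 2
  have hA : ∀ j, 0 ≤ A j := fun j ↦ integral_nonneg hℓ.le fun _ _ ↦ by positivity
  have key := hCB (fun j ↦ a ^ (2 * j) * A j) (fun j ↦ mul_nonneg (by positivity) (hA j))
    fun i hi ε hε hε1 ↦ by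
      have h := sq_mul_integral_norm_iteratedDerivWithin_sq_le hH hi (mul_pos hε ha)
        (by nlinarith : ε * a ≤ ℓ - 0)
      calc ε ^ 2 * (a ^ (2 * (i + 1)) * A (i + 1)) = a ^ (2 * i) * ((ε * a) ^ 2 * A (i + 1)) := by
            ring
        _ ≤ a ^ (2 * i) * (648 * (A i + (ε * a) ^ 4 * A (i + 2))) := by gcongr
        _ = 648 * (a ^ (2 * i) * A i + ε ^ 4 * (a ^ (2 * (i + 2)) * A (i + 2))) := by ring
  simpa only [A, mul_zero, pow_zero, one_mul, iteratedDerivWithin_zero] using key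

/-- **Sobolev interpolation inequality (L² version).**
For integers `n ≥ 2`, `m ≥ 1` and `0 ≤ k < n` there is a constant `C > 0`, depending only on
`k`, `n` and `m`, such that for every `ℓ > 0`, every `a` with `0 < a ≤ ℓ` and every `n`-times
continuously differentiable `H : [0, ℓ] → ℝ^m`,
`a^(2k) ∫₀^ℓ ‖H⁽ᵏ⁾‖² ≤ C (∫₀^ℓ ‖H‖² + a^(2n) ∫₀^ℓ ‖H⁽ⁿ⁾‖²)`. -/
theorem interpolation_inequality_L2 (n m k : ℕ) (hn : 2 ≤ n) (hm : 1 ≤ m) (hk : k < n) :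
    ∃ C : ℝ, 0 < C ∧
      ∀ ℓ : ℝ, 0 < ℓ → ∀ a : ℝ, 0 < a → a ≤ ℓ →
        ∀ H : ℝ → EuclideanSpace ℝ (Fin m), ContDiffOn ℝ n H (Icc 0 ℓ) →
          a ^ (2 * k) * ∫ θ in (0:ℝ)..ℓ, ‖iteratedDerivWithin k H (Icc 0 ℓ) θ‖ ^ 2 ≤
            C * ((∫ θ in (0:ℝ)..ℓ, ‖H θ‖ ^ 2) +
              a ^ (2 * n) * ∫ θ in (0:ℝ)..ℓ, ‖iteratedDerivWithin n H (Icc 0 ℓ) θ‖ ^ 2) :=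
  interpolation_inequality_L2_general n m k hk
end

section
/- Let m ≥ 1 be an integer, ℓ > 0, and let u : ℝ → ℝ^m be a twice continuously differentiable function that is ℓ-periodic, i.e. u(θ + ℓ) = u(θ) for all θ. Then sup_{θ ∈ ℝ} ‖u'(θ)‖ ≤ (1/2) ∫₀^ℓ ‖u''(σ)‖ dσ, and consequently ∫₀^ℓ ‖u'(θ)‖² dθ ≤ (ℓ²/4) ∫₀^ℓ ‖u''(θ)‖² dθ. -/
open MeasureTheory Set

/-!
With `v = u'`, which is `ℓ`-periodic with mean zero, every value `v θ` is at least as far from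
some other value `v τ` as from the origin (pick `τ` with `⟪v θ, v τ⟫ ≤ 0`, which exists since
`∫₀^ℓ ⟪v θ, v⟫ = 0`). The two arcs of the circle `ℝ / ℓℤ` between `τ` and `θ` each bound
`‖v θ - v τ‖` by the integral of `‖v'‖` over the arc, whence `2 ‖v θ‖ ≤ ∫₀^ℓ ‖v'‖`. The `L²`
estimate follows by integrating the square of this bound and applying Cauchy–Schwarz.
-/

theorem sq_intervalIntegral_le_mul_intervalIntegral_sq {f : ℝ → ℝ} {a b : ℝ}
    (hf : IntervalIntegrable f volume a b) (hf2 : IntervalIntegrable (fun x ↦ f x ^ 2) volume a b)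
    (hab : a ≤ b) : (∫ x in a..b, f x) ^ 2 ≤ (b - a) * ∫ x in a..b, f x ^ 2 := by
  -- `t ↦ ∫ (f - t)²` is a nonnegative quadratic polynomial, so its discriminant is nonpositive.
  have hquad : ∀ t : ℝ,
      0 ≤ (b - a) * (t * t) + (-2 * ∫ x in a..b, f x) * t + ∫ x in a..b, f x ^ 2 := by
    intro t
    have hexp : ∫ x in a..b, (f x - t) ^ 2
        = (b - a) * (t * t) + (-2 * ∫ x in a..b, f x) * t + ∫ x in a..b, f x ^ 2 := by
      have hpoly : (fun x ↦ (f x - t) ^ 2) = fun x ↦ f x ^ 2 - (2 * t) * f x + t * t := by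
        ext x
        ring
      rw [hpoly, intervalIntegral.integral_add (hf2.sub (hf.const_mul _)) intervalIntegrable_const,
        intervalIntegral.integral_sub hf2 (hf.const_mul _), intervalIntegral.integral_const_mul,
        intervalIntegral.integral_const, smul_eq_mul]
      ring
    exact hexp ▸ intervalIntegral.integral_nonneg hab fun x _ ↦ sq_nonneg _
  have hdisc := discrim_le_zero hquad
  rw [discrim] at hdisc
  linarith

section

open Function

variable {E : Type*} [NormedAddCommGroup E]

theorem norm_sub_le_intervalIntegral_norm_of_hasDerivAt [NormedSpace ℝ E] [CompleteSpace E]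
    {f f' : ℝ → E} {a b : ℝ} (hab : a ≤ b) (hf : ∀ x ∈ uIcc a b, HasDerivAt f (f' x) x)
    (hf' : IntervalIntegrable f' volume a b) : ‖f b - f a‖ ≤ ∫ x in a..b, ‖f' x‖ := by
  rw [← intervalIntegral.integral_eq_sub_of_hasDerivAt hf hf']
  exact intervalIntegral.norm_integral_le_integral_norm hab

theorem Function.Periodic.deriv [NormedSpace ℝ E] {f : ℝ → E} {c : ℝ} (hf : Periodic f c) :
    Periodic (deriv f) c := fun x ↦ by
  rw [← deriv_comp_add_const, hf.funext]

theorem two_mul_norm_sub_le_intervalIntegral_norm_deriv_of_periodic [NormedSpace ℝ E]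
    [CompleteSpace E] {f : ℝ → E} {ℓ : ℝ} (hf : Periodic f ℓ) (hℓ : 0 < ℓ) (hf1 : ContDiff ℝ 1 f)
    (s t : ℝ) :
    2 * ‖f t - f s‖ ≤ ∫ x in 0..ℓ, ‖deriv f x‖ := by
  have hderiv : ∀ x, HasDerivAt f (deriv f x) x :=
    fun x ↦ (hf1.differentiable one_ne_zero x).hasDerivAt
  have hint : ∀ a b, IntervalIntegrable (deriv f) volume a b :=
    fun a b ↦ (hf1.continuous_deriv le_rfl).intervalIntegrable a b
  -- Move `t` into `[s, s + ℓ)`; the two arcs from `s` to `t` and from `t` to `s + ℓ` then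
  -- make up one period, and each bounds `‖f t - f s‖`.
  obtain ⟨t', ht', hft'⟩ := hf.exists_mem_Ico hℓ t s
  calc 2 * ‖f t - f s‖ = ‖f t' - f s‖ + ‖f (s + ℓ) - f t'‖ := by
        rw [hf s, hft', norm_sub_rev (f s)]
        ring
    _ ≤ (∫ x in s..t', ‖deriv f x‖) + ∫ x in t'..s + ℓ, ‖deriv f x‖ :=
        add_le_add
          (norm_sub_le_intervalIntegral_norm_of_hasDerivAt ht'.1 (fun x _ ↦ hderiv x) (hint _ _))
          (norm_sub_le_intervalIntegral_norm_of_hasDerivAt ht'.2.le (fun x _ ↦ hderiv x)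
            (hint _ _))
    _ = ∫ x in s..s + ℓ, ‖deriv f x‖ :=
        intervalIntegral.integral_add_adjacent_intervals (hint _ _).norm (hint _ _).norm
    _ = ∫ x in 0..ℓ, ‖deriv f x‖ := by
        simpa using (hf.deriv.comp norm).intervalIntegral_add_eq s 0

theorem exists_norm_le_norm_sub_of_intervalIntegral_eq_zero [InnerProductSpace ℝ E]
    [CompleteSpace E] {f : ℝ → E} {ℓ : ℝ} (hℓ : 0 < ℓ) (hf : Continuous f)
    (h0 : ∫ x in 0..ℓ, f x = 0) (y : E) :
    ∃ τ, ‖y‖ ≤ ‖y - f τ‖ := by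
  obtain ⟨τ, hτ⟩ : ∃ τ, inner ℝ y (f τ) ≤ 0 := by
    by_contra! hpos
    have hcomm : ∫ x in 0..ℓ, inner ℝ y (f x) = inner ℝ y (∫ x in 0..ℓ, f x) :=
      (innerSL ℝ y).intervalIntegral_comp_comm (hf.intervalIntegrable 0 ℓ)
    have := intervalIntegral.intervalIntegral_pos_of_pos_on
      ((continuous_const.inner hf).intervalIntegrable 0 ℓ) (fun x _ ↦ hpos x) hℓ
    simp [hcomm, h0] at this
  refine ⟨τ, (pow_le_pow_iff_left₀ (norm_nonneg _) (norm_nonneg _) two_ne_zero).mp ?_⟩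
  rw [norm_sub_sq_real]
  nlinarith [sq_nonneg ‖f τ‖]

theorem norm_le_half_intervalIntegral_norm_deriv_of_periodic [InnerProductSpace ℝ E]
    [CompleteSpace E] {f : ℝ → E} {ℓ : ℝ} (hf : Periodic f ℓ) (hℓ : 0 < ℓ) (hf1 : ContDiff ℝ 1 f)
    (h0 : ∫ x in 0..ℓ, f x = 0) (θ : ℝ) : ‖f θ‖ ≤ 1 / 2 * ∫ x in 0..ℓ, ‖deriv f x‖ := by
  obtain ⟨τ, hτ⟩ := exists_norm_le_norm_sub_of_intervalIntegral_eq_zero hℓ hf1.continuous h0 (f θ)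
  linarith [two_mul_norm_sub_le_intervalIntegral_norm_deriv_of_periodic hf hℓ hf1 τ θ]

end

theorem periodic_first_derivative_estimate_general (m : ℕ) (ℓ : ℝ) (hℓ : 0 < ℓ)
    (u : ℝ → EuclideanSpace ℝ (Fin m)) (hu : ContDiff ℝ 2 u)
    (hper : ∀ θ : ℝ, u (θ + ℓ) = u θ) :
    (∀ θ : ℝ, ‖deriv u θ‖ ≤ (1 / 2) * ∫ σ in (0:ℝ)..ℓ, ‖iteratedDeriv 2 u σ‖) ∧
      (∫ θ in (0:ℝ)..ℓ, ‖deriv u θ‖ ^ 2) ≤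
        (ℓ ^ 2 / 4) * ∫ θ in (0:ℝ)..ℓ, ‖iteratedDeriv 2 u θ‖ ^ 2 := by
  have hu' : ContDiff ℝ 1 (deriv u) := hu.deriv'
  have hmean : ∫ θ in 0..ℓ, deriv u θ = 0 := by
    rw [intervalIntegral.integral_deriv_eq_sub (fun x _ ↦ hu.differentiable two_ne_zero x)
      (hu'.continuous.intervalIntegrable 0 ℓ), ← hper 0, zero_add, sub_self]
  have hu'' : iteratedDeriv 2 u = deriv (deriv u) := by
    rw [iteratedDeriv_succ, iteratedDeriv_one]
  have hsup := norm_le_half_intervalIntegral_norm_deriv_of_periodic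
    (Function.Periodic.deriv hper) hℓ hu' hmean
  rw [hu'']
  refine ⟨hsup, ?_⟩
  have hnorm : Continuous fun θ ↦ ‖deriv (deriv u) θ‖ := (hu'.continuous_deriv le_rfl).norm
  have hcs := sq_intervalIntegral_le_mul_intervalIntegral_sq (hnorm.intervalIntegrable 0 ℓ)
    ((hnorm.pow 2).intervalIntegrable 0 ℓ) hℓ.le
  calc ∫ θ in 0..ℓ, ‖deriv u θ‖ ^ 2
      ≤ ∫ _ in 0..ℓ, (1 / 2 * ∫ σ in 0..ℓ, ‖deriv (deriv u) σ‖) ^ 2 :=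
        intervalIntegral.integral_mono_on hℓ.le
          ((hu'.continuous.norm.pow 2).intervalIntegrable 0 ℓ) intervalIntegrable_const
          fun θ _ ↦ pow_le_pow_left₀ (norm_nonneg _) (hsup θ) 2
    _ = ℓ / 4 * (∫ σ in 0..ℓ, ‖deriv (deriv u) σ‖) ^ 2 := by
        rw [intervalIntegral.integral_const, smul_eq_mul]
        ring
    _ ≤ ℓ / 4 * ((ℓ - 0) * ∫ σ in 0..ℓ, ‖deriv (deriv u) σ‖ ^ 2) := by gcongr
    _ = ℓ ^ 2 / 4 * ∫ σ in 0..ℓ, ‖deriv (deriv u) σ‖ ^ 2 := by ring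

/-- **Poincaré-type estimate for periodic functions (trivial holonomy case).**
If `u : ℝ → ℝ^m` is twice continuously differentiable and `ℓ`-periodic, then
`sup_θ ‖u'(θ)‖ ≤ (1/2) ∫₀^ℓ ‖u''‖` and `∫₀^ℓ ‖u'‖² ≤ (ℓ²/4) ∫₀^ℓ ‖u''‖²`. -/
theorem periodic_first_derivative_estimate (m : ℕ) (hm : 1 ≤ m) (ℓ : ℝ) (hℓ : 0 < ℓ)
    (u : ℝ → EuclideanSpace ℝ (Fin m)) (hu : ContDiff ℝ 2 u)
    (hper : ∀ θ : ℝ, u (θ + ℓ) = u θ) :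
    (∀ θ : ℝ, ‖deriv u θ‖ ≤ (1 / 2) * ∫ σ in (0:ℝ)..ℓ, ‖iteratedDeriv 2 u σ‖) ∧
      (∫ θ in (0:ℝ)..ℓ, ‖deriv u θ‖ ^ 2) ≤
        (ℓ ^ 2 / 4) * ∫ θ in (0:ℝ)..ℓ, ‖iteratedDeriv 2 u θ‖ ^ 2 :=
  periodic_first_derivative_estimate_general m ℓ hℓ u hu hper
end

section
/- Let n ≥ 2 be an integer and a₀, a₁, …, a_n ≥ 0 be constants. Fix t ∈ [0,1) and real numbers p, q, and define the curve c : [0, 2π] → ℝ² by c(θ) = ((1−t)(θ−π) + x₀, y₀) translated arbitrarily, i.e. any curve with ∂_θ c(θ) = (1−t, 0), together with the vector field h : [0, 2π] → ℝ² given by h(θ) = (p − (θ−π), q). Then, with D_s := ‖∂_θ c‖^{-1} ∂_θ, one has D_s h(θ) = (−(1−t)^{-1}, 0) for all θ, D_s^i h = 0 for all i ≥ 2, and Σ_{i=0}^{n} a_i ∫₀^{2π} ‖D_s^i h(θ)‖² ‖∂_θ c(θ)‖ dθ = 2π (1−t) a₀ ( π²/3 + p² + q² ) + 2π a₁ (1−t)^{-1}.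 -/
open Real MeasureTheory

/-- The vector `(x, y)` in the Euclidean plane `ℝ²`. -/
noncomputable def vec2 (x y : ℝ) : EuclideanSpace ℝ (Fin 2) :=
  (WithLp.equiv 2 (Fin 2 → ℝ)).symm ![x, y]

/-- The arc-length derivative `D_s = ‖∂_θ c‖⁻¹ ∂_θ` along a plane curve `c`. -/
noncomputable def Ds (c : ℝ → EuclideanSpace ℝ (Fin 2)) (h : ℝ → EuclideanSpace ℝ (Fin 2)) :
    ℝ → EuclideanSpace ℝ (Fin 2) :=
  fun θ => ‖deriv c θ‖⁻¹ • deriv h θ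

/-!
Along a curve of constant speed `1 - t` the operator `D_s` is `(1 - t)⁻¹ ∂_θ`. The field `h` is
affine in `θ`, so `D_s h` is constant and every higher `D_s^i h` vanishes; only the `a₀` and `a₁`
terms of the energy survive, and both are elementary integrals.
-/

lemma vec2_add (x y x' y' : ℝ) : vec2 x y + vec2 x' y' = vec2 (x + x') (y + y') := by
  ext i; fin_cases i <;> simp [vec2]

lemma smul_vec2 (a x y : ℝ) : a • vec2 x y = vec2 (a * x) (a * y) := by
  ext i; fin_cases i <;> simp [vec2]

lemma norm_vec2_sq (x y : ℝ) : ‖vec2 x y‖ ^ 2 = x ^ 2 + y ^ 2 := by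
  simp [EuclideanSpace.norm_sq_eq, vec2, Fin.sum_univ_two]

lemma norm_vec2_zero_right (x : ℝ) : ‖vec2 x 0‖ = |x| := by
  rw [← sqrt_sq_eq_abs, ← sqrt_sq (norm_nonneg _), norm_vec2_sq]
  ring_nf

lemma hasDerivAt_vec2 {f g : ℝ → ℝ} {f' g' θ : ℝ} (hf : HasDerivAt f f' θ)
    (hg : HasDerivAt g g' θ) :
    HasDerivAt (fun θ => vec2 (f θ) (g θ)) (vec2 f' g') θ := by
  have key : ∀ x y, vec2 x y = x • vec2 1 0 + y • vec2 0 1 := by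
    intro x y; simp [smul_vec2, vec2_add]
  rw [key f' g']
  exact ((hf.smul_const (vec2 1 0)).add (hg.smul_const (vec2 0 1))).congr_of_eventuallyEq
    (.of_forall fun θ => key (f θ) (g θ))

lemma Ds_const (c : ℝ → EuclideanSpace ℝ (Fin 2)) (v : EuclideanSpace ℝ (Fin 2)) :
    Ds c (fun _ => v) = 0 := by
  ext1 θ; simp [Ds]

lemma iterate_Ds_const (c : ℝ → EuclideanSpace ℝ (Fin 2)) (v : EuclideanSpace ℝ (Fin 2))
    (i : ℕ) : (Ds c)^[i + 1] (fun _ => v) = 0 := by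
  induction i with
  | zero => exact Ds_const c v
  | succ i ih => rw [Function.iterate_succ_apply', ih]; exact Ds_const c 0

lemma Finset.sum_range_eq_of_eq_zero {M : Type*} [AddCommMonoid M] {f : ℕ → M} {m n : ℕ}
    (hmn : m ≤ n) (hf : ∀ i, m ≤ i → f i = 0) :
    ∑ i ∈ range n, f i = ∑ i ∈ range m, f i :=
  (sum_subset (range_subset_range.2 hmn) fun i _ hi => hf i (by simpa using hi)).symm

lemma integral_sq_sub_add_sq (a b m p q : ℝ) :
    ∫ θ in a..b, ((p - (θ - m)) ^ 2 + q ^ 2) =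
      ((p - (a - m)) ^ 3 - (p - (b - m)) ^ 3) / 3 + q ^ 2 * (b - a) := by
  have := intervalIntegral.integral_comp_sub_left (fun x => x ^ 2 + q ^ 2) (a := a) (b := b) (p + m)
  rw [show (fun θ => (p - (θ - m)) ^ 2 + q ^ 2) = fun θ => (p + m - θ) ^ 2 + q ^ 2 by ext; ring_nf,
    this, intervalIntegral.integral_add ((continuous_pow 2).intervalIntegrable _ _)
    intervalIntegrable_const, integral_pow]
  simp only [Nat.reduceAdd, Nat.cast_ofNat, intervalIntegral.integral_const,
    sub_sub_sub_cancel_left, smul_eq_mul]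
  ring

theorem shrinking_line_energy_general (n : ℕ) (hn : 2 ≤ n) (a : ℕ → ℝ)
    (t : ℝ) (ht1 : t < 1) (p q : ℝ)
    (c : ℝ → EuclideanSpace ℝ (Fin 2))
    (hc : ∀ θ : ℝ, deriv c θ = vec2 (1 - t) 0)
    (h : ℝ → EuclideanSpace ℝ (Fin 2))
    (hh : ∀ θ : ℝ, h θ = vec2 (p - (θ - π)) q) :
    (∀ θ : ℝ, Ds c h θ = vec2 (-(1 - t)⁻¹) 0) ∧
    (∀ i : ℕ, 2 ≤ i → ∀ θ : ℝ, (Ds c)^[i] h θ = 0) ∧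
    (∑ i ∈ Finset.range (n + 1),
        a i * ∫ θ in (0:ℝ)..(2 * π), ‖(Ds c)^[i] h θ‖ ^ 2 * ‖deriv c θ‖) =
      2 * π * (1 - t) * a 0 * (π ^ 2 / 3 + p ^ 2 + q ^ 2) + 2 * π * a 1 * (1 - t)⁻¹ := by
  have hpos : 0 < 1 - t := by linarith
  have hspeed : ∀ θ, ‖deriv c θ‖ = 1 - t := fun θ => by
    rw [hc, norm_vec2_zero_right, abs_of_pos hpos]
  have hDs : Ds c h = fun _ => vec2 (-(1 - t)⁻¹) 0 := by
    ext1 θ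
    have hderiv : deriv h θ = vec2 (-1) 0 := by
      rw [funext hh]
      exact (hasDerivAt_vec2 (((hasDerivAt_id θ).sub_const π).const_sub p)
        (hasDerivAt_const θ q)).deriv
    rw [Ds, hspeed, hderiv, smul_vec2]
    ring_nf
  have hDs_iterate : ∀ i, 2 ≤ i → (Ds c)^[i] h = 0 := by
    intro i hi
    obtain ⟨k, rfl⟩ := Nat.exists_eq_add_of_le' hi
    rw [Function.iterate_succ_apply, hDs, iterate_Ds_const]
  refine ⟨congrFun hDs, fun i hi => congrFun (hDs_iterate i hi), ?_⟩
  rw [Finset.sum_range_eq_of_eq_zero (m := 2) (by omega) fun i hi => by simp [hDs_iterate i hi],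
    Finset.sum_range_succ, Finset.sum_range_one]
  simp only [Function.iterate_zero, id_eq, Function.iterate_one, hDs, hh, hspeed, norm_vec2_sq,
    intervalIntegral.integral_mul_const, integral_sq_sub_add_sq, intervalIntegral.integral_const,
    smul_eq_mul]
  field_simp [hpos.ne']
  ring

/-- **Energy of the shrinking straight lines.**
For any curve `c` with `∂_θ c = (1−t, 0)` and the field `h(θ) = (p − (θ−π), q)`, one has
`D_s h = (−(1−t)⁻¹, 0)`, `D_s^i h = 0` for `i ≥ 2`, and
`Σ_{i=0}^n a_i ∫₀^{2π} ‖D_s^i h‖² ‖∂_θ c‖ dθ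
  = 2π(1−t)a₀(π²/3 + p² + q²) + 2π a₁ (1−t)⁻¹`. -/
theorem shrinking_line_energy (n : ℕ) (hn : 2 ≤ n) (a : ℕ → ℝ) (ha : ∀ i, 0 ≤ a i)
    (t : ℝ) (ht0 : 0 ≤ t) (ht1 : t < 1) (p q : ℝ)
    (c : ℝ → EuclideanSpace ℝ (Fin 2))
    (hc : ∀ θ : ℝ, deriv c θ = vec2 (1 - t) 0)
    (h : ℝ → EuclideanSpace ℝ (Fin 2))
    (hh : ∀ θ : ℝ, h θ = vec2 (p - (θ - π)) q) :
    (∀ θ : ℝ, Ds c h θ = vec2 (-(1 - t)⁻¹) 0) ∧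
    (∀ i : ℕ, 2 ≤ i → ∀ θ : ℝ, (Ds c)^[i] h θ = 0) ∧
    (∑ i ∈ Finset.range (n + 1),
        a i * ∫ θ in (0:ℝ)..(2 * π), ‖(Ds c)^[i] h θ‖ ^ 2 * ‖deriv c θ‖) =
      2 * π * (1 - t) * a 0 * (π ^ 2 / 3 + p ^ 2 + q ^ 2) + 2 * π * a 1 * (1 - t)⁻¹ :=
  shrinking_line_energy_general n hn a t ht1 p q c hc h hh
end

section
/- Let n ≥ 2 be an integer and a₀, a₁, …, a_n ≥ 0 be constants. Let f, g : [0,1) → ℝ be continuously differentiable functions satisfying ∫₀¹ |f'(t)| √(1−t) dt < ∞ and ∫₀¹ |g'(t)| √(1−t) dt < ∞. Then ∫₀¹ ( 2π (1−t) a₀ ( π²/3 + f'(t)² + g'(t)² ) + 2π a₁ (1−t)^{-1} )^{1/2} dt < ∞. -/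
open Real MeasureTheory Set

/-! The radicand splits into four summands, nonnegative on `[0, 1)`, whose square roots are
integrable there: a constant times `√(1 - t)`, the two assumed integrands `|f'| √(1 - t)` and
`|g'| √(1 - t)` up to constants, and a constant times `(1 - t)^(-1/2)`. Subadditivity of `√`
dominates the square root of the sum by the sum of these square roots. -/

theorem Real.sqrt_add_le_add_sqrt {x y : ℝ} (hx : 0 ≤ x) (hy : 0 ≤ y) : √(x + y) ≤ √x + √y := by
  simpa only [sqrt_eq_rpow] using rpow_add_le_add_rpow hx hy (by norm_num) (by norm_num)

/-- Measurability of `√(u + v)` comes for free: a.e. it equals `√((√u)² + (√v)²)`. -/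
theorem MeasureTheory.Integrable.sqrt_add {α : Type*} [MeasurableSpace α] {μ : Measure α}
    {u v : α → ℝ} (hu : ∀ᵐ x ∂μ, 0 ≤ u x) (hv : ∀ᵐ x ∂μ, 0 ≤ v x)
    (hu' : Integrable (fun x => √(u x)) μ) (hv' : Integrable (fun x => √(v x)) μ) :
    Integrable (fun x => √(u x + v x)) μ := by
  have hmeas : AEStronglyMeasurable (fun x => √(u x + v x)) μ := by
    refine (continuous_sqrt.comp_aestronglyMeasurable
      ((hu'.1.pow 2).add (hv'.1.pow 2))).congr ?_
    filter_upwards [hu, hv] with x hux hvx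
    simp only [Pi.add_apply, Pi.pow_apply, sq_sqrt hux, sq_sqrt hvx]
  refine (hu'.add hv').mono' hmeas ?_
  filter_upwards [hu, hv] with x hux hvx
  rw [norm_of_nonneg (sqrt_nonneg _)]
  exact sqrt_add_le_add_sqrt hux hvx

theorem MeasureTheory.Integrable.sqrt_const_mul {α : Type*} [MeasurableSpace α] {μ : Measure α}
    {u : α → ℝ} (h : Integrable (fun x => √(u x)) μ) {c : ℝ} (hc : 0 ≤ c) :
    Integrable (fun x => √(c * u x)) μ := by
  simp only [sqrt_mul hc]
  exact h.const_mul _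

theorem integrableOn_sqrt_sub (a b : ℝ) : IntegrableOn (fun t => √(b - t)) (Ico a b) :=
  ((continuous_const.sub continuous_id).sqrt.integrableOn_Icc).mono_set Ico_subset_Icc_self

theorem integrableOn_inv_sqrt_sub (a b : ℝ) : IntegrableOn (fun t => (√(b - t))⁻¹) (Ico a b) := by
  have hrpow : IntervalIntegrable (fun t => (b - t) ^ (-(1 / 2) : ℝ)) volume a b := by
    simpa using ((intervalIntegral.intervalIntegrable_rpow' (a := 0) (b := b - a)
      (r := -(1 / 2)) (by norm_num)).comp_sub_left b).symm
  rcases le_total a b with hab | hba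
  · rw [integrableOn_Ico_iff_integrableOn_Ioo]
    refine ((intervalIntegrable_iff_integrableOn_Ioo_of_le hab).1 hrpow).congr_fun
      (fun t ht => ?_) measurableSet_Ioo
    rw [sqrt_eq_rpow, ← rpow_neg (sub_nonneg.2 ht.2.le)]
  · simp [Ico_eq_empty_of_le hba]

theorem shrinking_line_finite_length_general (a : ℕ → ℝ) (ha : ∀ i, 0 ≤ a i)
    (f' g' : ℝ → ℝ)
    (hfint : IntegrableOn (fun t => |f' t| * Real.sqrt (1 - t)) (Ico 0 1))
    (hgint : IntegrableOn (fun t => |g' t| * Real.sqrt (1 - t)) (Ico 0 1)) :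
    IntegrableOn
      (fun t => Real.sqrt (2 * π * (1 - t) * a 0 * (π ^ 2 / 3 + f' t ^ 2 + g' t ^ 2) +
        2 * π * a 1 * (1 - t)⁻¹)) (Ico 0 1) := by
  have hsplit (t : ℝ) : 2 * π * (1 - t) * a 0 * (π ^ 2 / 3 + f' t ^ 2 + g' t ^ 2) +
      2 * π * a 1 * (1 - t)⁻¹ = 2 * π * a 0 * (π ^ 2 / 3) * (1 - t) +
        2 * π * a 0 * (f' t ^ 2 * (1 - t)) + 2 * π * a 0 * (g' t ^ 2 * (1 - t)) +
        2 * π * a 1 * (1 - t)⁻¹ := by ring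
  simp only [hsplit]
  have ha₀ := ha 0
  have ha₁ := ha 1
  have hweighted (x : ℝ → ℝ) (hx : IntegrableOn (fun t => |x t| * √(1 - t)) (Ico 0 1)) :
      IntegrableOn (fun t => √(x t ^ 2 * (1 - t))) (Ico 0 1) := by
    simpa only [sqrt_mul (sq_nonneg _), sqrt_sq_eq_abs] using hx
  have hsingular : IntegrableOn (fun t => √((1 - t)⁻¹)) (Ico 0 1) := by
    simpa only [sqrt_inv] using integrableOn_inv_sqrt_sub 0 1
  have hs : ∀ᵐ t ∂volume.restrict (Ico (0:ℝ) 1), 0 ≤ 1 - t :=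
    ae_restrict_of_forall_mem measurableSet_Ico fun t ht => sub_nonneg.2 ht.2.le
  refine .sqrt_add ?_ ?_ (.sqrt_add ?_ ?_ (.sqrt_add ?_ ?_
    ((integrableOn_sqrt_sub 0 1).sqrt_const_mul (by positivity))
    ((hweighted f' hfint).sqrt_const_mul (by positivity)))
    ((hweighted g' hgint).sqrt_const_mul (by positivity)))
    (hsingular.sqrt_const_mul (by positivity))
  all_goals filter_upwards [hs] with t ht
  all_goals bound

/-- **Finite-length escape to zero length (metric incompleteness of open curves).**
If `f, g : [0,1) → ℝ` are continuously differentiable with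
`∫₀¹ |f'| √(1−t) dt < ∞` and `∫₀¹ |g'| √(1−t) dt < ∞`, then the `G`-speed of the shrinking
straight-line path, `t ↦ √(2π(1−t)a₀(π²/3 + f'(t)² + g'(t)²) + 2π a₁ (1−t)⁻¹)`,
is integrable on `[0,1)`, i.e. the path has finite length. -/
theorem shrinking_line_finite_length (n : ℕ) (hn : 2 ≤ n) (a : ℕ → ℝ) (ha : ∀ i, 0 ≤ a i)
    (f g f' g' : ℝ → ℝ)
    (hf : ∀ t ∈ Ico (0:ℝ) 1, HasDerivWithinAt f (f' t) (Ico 0 1) t)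
    (hg : ∀ t ∈ Ico (0:ℝ) 1, HasDerivWithinAt g (g' t) (Ico 0 1) t)
    (hf' : ContinuousOn f' (Ico 0 1)) (hg' : ContinuousOn g' (Ico 0 1))
    (hfint : IntegrableOn (fun t => |f' t| * Real.sqrt (1 - t)) (Ico 0 1))
    (hgint : IntegrableOn (fun t => |g' t| * Real.sqrt (1 - t)) (Ico 0 1)) :
    IntegrableOn
      (fun t => Real.sqrt (2 * π * (1 - t) * a 0 * (π ^ 2 / 3 + f' t ^ 2 + g' t ^ 2) +
        2 * π * a 1 * (1 - t)⁻¹)) (Ico 0 1) :=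
  shrinking_line_finite_length_general a ha f' g' hfint hgint
end

section
/- Define f : [0,1) → ℝ by f(t) = sin(−log(1−t)). Then f is continuously differentiable on [0,1), the integral ∫₀¹ |f'(t)| √(1−t) dt is finite and at most 2, and the limit lim_{t → 1⁻} f(t) does not exist. -/
open Real MeasureTheory Set Filter Topology

/-!
On `[0, 1)` the substitution `x = -log (1 - t)` turns `sin (-log (1 - t))` into `sin x` with
`x → ∞` as `t → 1⁻`, so the function inherits the oscillation of `sin` at infinity and has no
left limit at `1`. Its derivative is `cos (-log (1 - t)) / (1 - t)`, so the weighted integrand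
`|f'(t)| √(1 - t)` is dominated by `(1 - t) ^ (-1/2)`, whose integral over `[0, 1)` is `2`.
-/

theorem Function.Periodic.eq_of_tendsto_atTop {X : Type*} [TopologicalSpace X] [T2Space X]
    {f : ℝ → X} {c : ℝ} (hf : Function.Periodic f c) (hc : 0 < c) {L : X}
    (hL : Tendsto f atTop (𝓝 L)) (x : ℝ) : f x = L := by
  have hshift : Tendsto (fun n : ℕ => x + n * c) atTop atTop :=
    tendsto_atTop_add_const_left _ _ (tendsto_natCast_atTop_atTop.atTop_mul_const hc)
  have hconst : (fun n : ℕ => f (x + n * c)) = fun _ => f x := funext fun n => hf.nat_mul n x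
  have := hL.comp hshift
  rw [Function.comp_def, hconst] at this
  exact tendsto_nhds_unique tendsto_const_nhds this

theorem Real.not_tendsto_sin_atTop (L : ℝ) : ¬ Tendsto sin atTop (𝓝 L) := fun hL => by
  have h₀ := sin_periodic.eq_of_tendsto_atTop two_pi_pos hL 0
  have h₁ := sin_periodic.eq_of_tendsto_atTop two_pi_pos hL (π / 2)
  rw [sin_zero] at h₀
  rw [sin_pi_div_two] at h₁
  linarith

theorem tendsto_one_sub_exp_neg_atTop : Tendsto (fun x => 1 - exp (-x)) atTop (𝓝[<] 1) := by
  refine tendsto_nhdsWithin_iff.mpr ⟨?_, Eventually.of_forall fun x => ?_⟩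
  · simpa using tendsto_exp_neg_atTop_nhds_zero.const_sub (1 : ℝ)
  · simpa using exp_pos (-x)

theorem contDiffOn_sin_neg_log_one_sub {n : WithTop ℕ∞} :
    ContDiffOn ℝ n (fun t => sin (-log (1 - t))) (Iio 1) := by
  refine contDiff_sin.comp_contDiffOn (ContDiffOn.neg ?_)
  exact (contDiffOn_log.comp (contDiffOn_const.sub contDiffOn_id)) fun t ht =>
    (sub_pos.mpr ht).ne'

theorem hasDerivAt_sin_neg_log_one_sub {t : ℝ} (ht : t < 1) :
    HasDerivAt (fun s => sin (-log (1 - s))) (cos (-log (1 - t)) / (1 - t)) t := by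
  have hlog : HasDerivAt (fun s => log (1 - s)) (-1 / (1 - t)) t :=
    ((hasDerivAt_id t).const_sub 1).log (sub_ne_zero.mpr ht.ne')
  convert hlog.fun_neg.sin using 1
  field_simp

theorem abs_deriv_sin_neg_log_one_sub_mul_sqrt_le {t : ℝ} (ht : t < 1) :
    |deriv (fun s => sin (-log (1 - s))) t| * √(1 - t) ≤ (1 - t) ^ (-(1 / 2) : ℝ) := by
  have hpos : 0 < 1 - t := sub_pos.mpr ht
  have hsqrt : (1 - t) ^ (-(1 / 2) : ℝ) = √(1 - t) / (1 - t) := by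
    rw [rpow_neg hpos.le, ← sqrt_eq_rpow, eq_div_iff hpos.ne']
    field_simp
    exact (sq_sqrt hpos.le).symm
  rw [(hasDerivAt_sin_neg_log_one_sub ht).deriv, hsqrt, abs_div, abs_of_pos hpos,
    div_mul_eq_mul_div]
  gcongr
  exact (mul_le_iff_le_one_left (sqrt_pos.mpr hpos)).mpr (abs_cos_le_one _)

theorem integrableOn_one_sub_rpow_Ico {r : ℝ} (hr : -1 < r) :
    IntegrableOn (fun t : ℝ => (1 - t) ^ r) (Ico 0 1) := by
  have h :=
    ((intervalIntegral.intervalIntegrable_rpow' (a := 0) (b := 1) hr).comp_sub_left 1).symm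
  rw [sub_zero, sub_self] at h
  exact (integrableOn_Ico_iff_integrableOn_Ioo).mpr
    ((intervalIntegrable_iff_integrableOn_Ioo_of_le zero_le_one).mp h)

theorem integral_one_sub_rpow_Ico {r : ℝ} (hr : -1 < r) :
    ∫ t in Ico (0 : ℝ) 1, (1 - t) ^ r = 1 / (r + 1) := by
  rw [integral_Ico_eq_integral_Ioo, ← integral_Ioc_eq_integral_Ioo,
    ← intervalIntegral.integral_of_le zero_le_one, intervalIntegral.integral_comp_sub_left
      (fun x : ℝ => x ^ r), sub_self, sub_zero, integral_rpow (Or.inl hr)]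
  simp [zero_rpow (by linarith : r + 1 ≠ 0)]

theorem integrableOn_abs_deriv_sin_neg_log_one_sub_mul_sqrt :
    IntegrableOn (fun t => |deriv (fun s => sin (-log (1 - s))) t| * √(1 - t)) (Ico 0 1) := by
  refine (integrableOn_one_sub_rpow_Ico (r := -(1 / 2)) (by norm_num)).mono' ?_ ?_
  · exact ((measurable_deriv _).abs.mul (by fun_prop)).aestronglyMeasurable
  · refine ae_restrict_of_forall_mem measurableSet_Ico fun t ht => ?_
    rw [Real.norm_of_nonneg (by positivity)]
    exact abs_deriv_sin_neg_log_one_sub_mul_sqrt_le ht.2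

/-- **The oscillating example `f(t) = sin(−log(1−t))`.**
`f` is continuously differentiable on `[0,1)`, `∫₀¹ |f'| √(1−t) dt` is finite and at most `2`,
and `f(t)` has no limit as `t → 1⁻`. -/
theorem sin_log_example :
    ContDiffOn ℝ 1 (fun t : ℝ => Real.sin (-Real.log (1 - t))) (Ico 0 1) ∧
    IntegrableOn
      (fun t => |deriv (fun s : ℝ => Real.sin (-Real.log (1 - s))) t| * Real.sqrt (1 - t))
      (Ico 0 1) ∧
    (∫ t in Ico (0:ℝ) 1,
        |deriv (fun s : ℝ => Real.sin (-Real.log (1 - s))) t| * Real.sqrt (1 - t)) ≤ 2 ∧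
    ¬ ∃ L : ℝ, Tendsto (fun t : ℝ => Real.sin (-Real.log (1 - t)))
        (nhdsWithin 1 (Iio 1)) (nhds L) := by
  refine ⟨contDiffOn_sin_neg_log_one_sub.mono fun t ht => ht.2,
    integrableOn_abs_deriv_sin_neg_log_one_sub_mul_sqrt, ?_, ?_⟩
  · calc ∫ t in Ico (0 : ℝ) 1, |deriv (fun s => sin (-log (1 - s))) t| * √(1 - t)
        ≤ ∫ t in Ico (0 : ℝ) 1, (1 - t) ^ (-(1 / 2) : ℝ) :=
          setIntegral_mono_on integrableOn_abs_deriv_sin_neg_log_one_sub_mul_sqrt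
            (integrableOn_one_sub_rpow_Ico (by norm_num)) measurableSet_Ico
            fun t ht => abs_deriv_sin_neg_log_one_sub_mul_sqrt_le ht.2
      _ = 2 := by norm_num [integral_one_sub_rpow_Ico]
  · rintro ⟨L, hL⟩
    apply Real.not_tendsto_sin_atTop L
    simpa [Function.comp_def] using hL.comp tendsto_one_sub_exp_neg_atTop
end
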